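/- arXiv:2506.13614 — 2 statements merged into one kernel-verified Lean document; each statement's English description precedes it below -/
import Mathlib

section
/- For every x ∈ ℝⁿ, the noise-perturbed posterior density p_t(· | y) is positive and differentiable at x, and its score satisfies ∇_x log p_t(x | y) = (σ̃²/σ_t²) · (∇ log p̃)(x̃(x)) − (σ_y² + σ_t²)^{−1} (x − y). (Proposition 1: the exact noise-perturbed posterior score for the denoising problem A = I, expressed through the unconditional score evaluated at x̃ and noise level σ̃.) -/
open MeasureTheory Real

/-- Isotropic Gaussian density on ℝⁿ with mean `m` and covariance `v • I`
(`v` is the variance, i.e. `v = σ²`): `N(x; m, σ²I) = (2πσ²)^{-n/2} exp(-‖x-m‖²/(2σ²))`. -/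
noncomputable def gaussDensity (n : ℕ) (v : ℝ) (m x : EuclideanSpace ℝ (Fin n)) : ℝ :=
  (2 * π * v) ^ (-(n : ℝ) / 2) * Real.exp (-‖x - m‖ ^ 2 / (2 * v))

/-!
Completing the square in `x₀` gives
`N(x; x₀, σ_t²I) N(y; x₀, σ_y²I) = N(x; y, (σ_y² + σ_t²)I) N(x̃(x); x₀, σ̃²I)`,
so integrating against `μ₀` yields `p_t(x | y) = N(x; y, (σ_y² + σ_t²)I) / Z · p̃(x̃(x))`.
Taking logarithms, the Gaussian factor contributes `-(x - y)/(σ_y² + σ_t²)` to the score and the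
affine map `x̃`, whose linear part is `σ̃²/σ_t²`, rescales the score of `p̃`. That `p̃` is
differentiable follows by differentiating under the integral sign: `‖∇ₓ N(x; x₀, σ²I)‖` is bounded
uniformly in `x` and `x₀`, so a constant dominates it when the prior is finite.
-/

section Gradient

variable {E : Type*} [NormedAddCommGroup E] [InnerProductSpace ℝ E] [CompleteSpace E]
  {f g : E → ℝ} {f' g' x : E}

theorem HasGradientAt.add (hf : HasGradientAt f f' x) (hg : HasGradientAt g g' x) :
    HasGradientAt (fun z => f z + g z) (f' + g') x := by
  rw [hasGradientAt_iff_hasFDerivAt, map_add]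
  exact (hasGradientAt_iff_hasFDerivAt.mp hf).add (hasGradientAt_iff_hasFDerivAt.mp hg)

theorem HasGradientAt.sub_const (hf : HasGradientAt f f' x) (c : ℝ) :
    HasGradientAt (fun z => f z - c) f' x :=
  hasGradientAt_iff_hasFDerivAt.mpr ((hasGradientAt_iff_hasFDerivAt.mp hf).sub_const c)

theorem HasGradientAt.comp_const_add_smul (c : E) (k : ℝ) (hf : HasGradientAt f f' (c + k • x)) :
    HasGradientAt (fun z => f (c + k • z)) (k • f') x := by
  have hL : HasFDerivAt (fun z => c + k • z) (k • ContinuousLinearMap.id ℝ E) x :=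
    ((hasFDerivAt_id x).const_smul k).const_add c
  rw [hasGradientAt_iff_hasFDerivAt] at hf ⊢
  refine (hf.comp x hL).congr_fderiv ?_
  ext w
  simp

end Gradient

section Gaussian

variable {n : ℕ} {v : ℝ}

lemma gaussDensity_pos (hv : 0 < v) (m x : EuclideanSpace ℝ (Fin n)) :
    0 < gaussDensity n v m x := by
  unfold gaussDensity; positivity

lemma gaussDensity_le (hv : 0 < v) (m x : EuclideanSpace ℝ (Fin n)) :
    gaussDensity n v m x ≤ (2 * π * v) ^ (-(n : ℝ) / 2) := by
  unfold gaussDensity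
  refine mul_le_of_le_one_right (by positivity) (exp_le_one_iff.mpr ?_)
  exact div_nonpos_of_nonpos_of_nonneg (neg_nonpos.mpr (sq_nonneg _)) (by positivity)

lemma exp_neg_sq_div_mul_le (hv : 0 < v) (t : ℝ) : exp (-t ^ 2 / (2 * v)) * t ≤ 1 + 2 * v := by
  set u := t ^ 2 / (2 * v)
  have hu : 0 ≤ u := by positivity
  have ht : t ^ 2 = 2 * v * u := by simp only [u]; field_simp
  have hdecay : exp (-u) ≤ 1 := exp_le_one_iff.mpr (neg_nonpos.mpr hu)
  have hpeak : u * exp (-u) ≤ 1 :=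
    (mul_exp_neg_le_exp_neg_one u).trans (exp_le_one_iff.mpr (by norm_num))
  rw [neg_div]
  calc exp (-u) * t ≤ exp (-u) * (1 + t ^ 2) := by gcongr; nlinarith [sq_nonneg (t - 1)]
    _ = exp (-u) + 2 * v * (u * exp (-u)) := by rw [ht]; ring
    _ ≤ 1 + 2 * v := add_le_add hdecay (mul_le_of_le_one_right (by positivity) hpeak)

lemma gaussDensity_mul_norm_sub_le (hv : 0 < v) (m x : EuclideanSpace ℝ (Fin n)) :
    gaussDensity n v m x * ‖x - m‖ ≤ (2 * π * v) ^ (-(n : ℝ) / 2) * (1 + 2 * v) := by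
  unfold gaussDensity
  rw [mul_assoc]
  exact mul_le_mul_of_nonneg_left (exp_neg_sq_div_mul_le hv _) (by positivity)

lemma continuous_gaussDensity_mean (x : EuclideanSpace ℝ (Fin n)) :
    Continuous (fun m => gaussDensity n v m x) := by
  unfold gaussDensity; fun_prop

lemma integrable_gaussDensity (hv : 0 < v) (μ : Measure (EuclideanSpace ℝ (Fin n)))
    [IsFiniteMeasure μ] (x : EuclideanSpace ℝ (Fin n)) :
    Integrable (fun m => gaussDensity n v m x) μ := by
  refine Integrable.mono' (integrable_const ((2 * π * v) ^ (-(n : ℝ) / 2)))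
    (continuous_gaussDensity_mean x).aestronglyMeasurable (ae_of_all _ fun m => ?_)
  rw [Real.norm_of_nonneg (gaussDensity_pos hv m x).le]
  exact gaussDensity_le hv m x

lemma log_gaussDensity (hv : 0 < v) (m x : EuclideanSpace ℝ (Fin n)) :
    log (gaussDensity n v m x) = log ((2 * π * v) ^ (-(n : ℝ) / 2)) + -‖x - m‖ ^ 2 / (2 * v) := by
  unfold gaussDensity
  rw [log_mul (by positivity) (exp_ne_zero _), log_exp]

lemma hasGradientAt_log_gaussDensity (hv : 0 < v) (m x : EuclideanSpace ℝ (Fin n)) :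
    HasGradientAt (fun x => log (gaussDensity n v m x)) (-v⁻¹ • (x - m)) x := by
  have hsq := ((hasFDerivAt_id x).sub_const m).norm_sq
  have h := (hsq.mul_const (-(2 * v)⁻¹)).const_add (log ((2 * π * v) ^ (-(n : ℝ) / 2)))
  have hlog : (fun x => log (gaussDensity n v m x))
      = fun x => log ((2 * π * v) ^ (-(n : ℝ) / 2)) + ‖id x - m‖ ^ 2 * -(2 * v)⁻¹ := by
    ext z
    rw [log_gaussDensity hv, id]
    ring
  rw [hasGradientAt_iff_hasFDerivAt, hlog]
  refine h.congr_fderiv ?_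
  ext w
  simp
  field_simp

lemma hasGradientAt_gaussDensity (hv : 0 < v) (m x : EuclideanSpace ℝ (Fin n)) :
    HasGradientAt (gaussDensity n v m) (-(gaussDensity n v m x / v) • (x - m)) x := by
  have h := (hasGradientAt_iff_hasFDerivAt.mp (hasGradientAt_log_gaussDensity hv m x)).exp
  simp only [exp_log (gaussDensity_pos hv m _)] at h
  rw [hasGradientAt_iff_hasFDerivAt]
  refine h.congr_fderiv ?_
  ext w
  simp
  ring

lemma gaussDensity_mul_gaussDensity {a b : ℝ} (ha : 0 < a) (hb : 0 < b)
    (x y x₀ : EuclideanSpace ℝ (Fin n)) :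
    gaussDensity n a x₀ x * gaussDensity n b x₀ y
      = gaussDensity n (b + a) y x *
        gaussDensity n (b⁻¹ + a⁻¹)⁻¹ x₀ ((b⁻¹ + a⁻¹)⁻¹ • (b⁻¹ • y + a⁻¹ • x)) := by
  set s := (b⁻¹ + a⁻¹)⁻¹
  have hs : s = a * b / (b + a) := by
    simp only [s]; field_simp; ring
  have hconst : (2 * π * a) ^ (-(n : ℝ) / 2) * (2 * π * b) ^ (-(n : ℝ) / 2)
      = (2 * π * (b + a)) ^ (-(n : ℝ) / 2) * (2 * π * s) ^ (-(n : ℝ) / 2) := by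
    rw [← mul_rpow (by positivity) (by positivity), ← mul_rpow (by positivity) (by positivity), hs]
    congr 1
    field_simp
  have hmean : s • (b⁻¹ • y + a⁻¹ • x) - x₀ = s • (b⁻¹ • (y - x₀) + a⁻¹ • (x - x₀)) := by
    have : s * (b⁻¹ + a⁻¹) = 1 := inv_mul_cancel₀ (by positivity)
    linear_combination (norm := module) this • x₀
  have hexp : -‖x - x₀‖ ^ 2 / (2 * a) + -‖y - x₀‖ ^ 2 / (2 * b)
      = -‖x - y‖ ^ 2 / (2 * (b + a)) + -‖s • (b⁻¹ • y + a⁻¹ • x) - x₀‖ ^ 2 / (2 * s) := by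
    rw [hmean, show x - y = (x - x₀) - (y - x₀) by abel]
    generalize x - x₀ = u
    generalize y - x₀ = w
    rw [norm_smul, mul_pow, norm_sub_sq_real, norm_add_sq_real, norm_smul, norm_smul, mul_pow,
      mul_pow, real_inner_smul_left, real_inner_smul_right, real_inner_comm w u]
    simp only [Real.norm_eq_abs, sq_abs]
    rw [hs]
    field_simp
    ring
  unfold gaussDensity
  calc _ = ((2 * π * a) ^ (-(n : ℝ) / 2) * (2 * π * b) ^ (-(n : ℝ) / 2)) *
        exp (-‖x - x₀‖ ^ 2 / (2 * a) + -‖y - x₀‖ ^ 2 / (2 * b)) := by rw [exp_add]; ring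
    _ = _ := by rw [hconst, hexp, exp_add]; ring

noncomputable def gaussianSmoothing (μ : Measure (EuclideanSpace ℝ (Fin n))) (v : ℝ)
    (z : EuclideanSpace ℝ (Fin n)) : ℝ :=
  ∫ x₀, gaussDensity n v x₀ z ∂μ

section Smoothing

variable (μ : Measure (EuclideanSpace ℝ (Fin n))) [IsFiniteMeasure μ]

lemma gaussianSmoothing_pos [NeZero μ] (hv : 0 < v) (z : EuclideanSpace ℝ (Fin n)) :
    0 < gaussianSmoothing μ v z := by
  rw [gaussianSmoothing, integral_pos_iff_support_of_nonneg
    (fun x₀ => (gaussDensity_pos hv x₀ z).le) (integrable_gaussDensity hv μ z)]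
  simp [Function.support, (gaussDensity_pos hv _ z).ne', NeZero.ne μ]

lemma differentiable_gaussianSmoothing (hv : 0 < v) :
    Differentiable ℝ (gaussianSmoothing μ v) := by
  intro z
  have hF' : Continuous fun x₀ =>
      InnerProductSpace.toDual ℝ _ (-(gaussDensity n v x₀ z / v) • (z - x₀)) :=
    (InnerProductSpace.toDual ℝ _).continuous.comp
      ((((continuous_gaussDensity_mean z).div_const v).neg).smul (continuous_const.sub continuous_id))
  refine (hasFDerivAt_integral_of_dominated_of_fderiv_le
    (bound := fun _ => (2 * π * v) ^ (-(n : ℝ) / 2) * (1 + 2 * v) / v) Filter.univ_mem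
    (.of_forall fun x => (continuous_gaussDensity_mean x).aestronglyMeasurable)
    (integrable_gaussDensity hv μ z) hF'.aestronglyMeasurable (ae_of_all _ fun x₀ x _ => ?_)
    (integrable_const _)
    (ae_of_all _ fun x₀ x _ => hasGradientAt_gaussDensity hv x₀ x)).differentiableAt
  rw [LinearIsometryEquiv.norm_map, norm_smul, norm_neg, Real.norm_of_nonneg
    (div_nonneg (gaussDensity_pos hv x₀ x).le hv.le), div_mul_eq_mul_div]
  exact div_le_div_of_nonneg_right (gaussDensity_mul_norm_sub_le hv x₀ x) hv.le

end Smoothing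

lemma integral_gaussDensity_withDensity_gaussDensity {a b Z : ℝ} (ha : 0 < a) (hb : 0 < b)
    (hZ : 0 ≤ Z) (μ : Measure (EuclideanSpace ℝ (Fin n))) (x y : EuclideanSpace ℝ (Fin n)) :
    ∫ x₀, gaussDensity n a x₀ x
        ∂μ.withDensity (fun x₀ => ENNReal.ofReal (gaussDensity n b x₀ y / Z))
      = gaussDensity n (b + a) y x / Z *
        gaussianSmoothing μ (b⁻¹ + a⁻¹)⁻¹ ((b⁻¹ + a⁻¹)⁻¹ • (b⁻¹ • y + a⁻¹ • x)) := by
  have hρ : Measurable fun x₀ => gaussDensity n b x₀ y / Z :=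
    ((continuous_gaussDensity_mean y).div_const Z).measurable
  rw [integral_withDensity_eq_integral_toReal_smul hρ.ennreal_ofReal, gaussianSmoothing,
    ← integral_const_mul]
  congr 1 with x₀
  rw [ENNReal.toReal_ofReal (div_nonneg (gaussDensity_pos hb x₀ y).le hZ), smul_eq_mul,
    div_mul_eq_mul_div, mul_comm, gaussDensity_mul_gaussDensity ha hb, div_mul_eq_mul_div]
  exact ae_of_all _ fun _ => ENNReal.ofReal_lt_top

lemma hasGradientAt_log_gaussDensity_div_mul_comp {p : EuclideanSpace ℝ (Fin n) → ℝ} {Z : ℝ}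
    (hv : 0 < v) (hZ : 0 < Z) (hp : ∀ z, 0 < p z) {c : EuclideanSpace ℝ (Fin n)} {k : ℝ} {x : EuclideanSpace ℝ (Fin n)}
    (hpd : DifferentiableAt ℝ p (c + k • x)) (y : EuclideanSpace ℝ (Fin n)) :
    HasGradientAt (fun z => log (gaussDensity n v y z / Z * p (c + k • z)))
      (k • gradient (fun z => log (p z)) (c + k • x) - v⁻¹ • (x - y)) x := by
  have hsplit : (fun z => log (gaussDensity n v y z / Z * p (c + k • z)))
      = fun z => (log (gaussDensity n v y z) - log Z) + log (p (c + k • z)) := by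
    ext z
    rw [log_mul (div_pos (gaussDensity_pos hv y z) hZ).ne' (hp _).ne',
      log_div (gaussDensity_pos hv y z).ne' hZ.ne']
  have hlogp : HasGradientAt (fun z => log (p z)) (gradient (fun z => log (p z)) (c + k • x))
      (c + k • x) :=
    (hpd.log (hp _).ne').hasGradientAt
  have h := ((hasGradientAt_log_gaussDensity hv y x).sub_const (log Z)).add
    (hlogp.comp_const_add_smul c k)
  rw [hsplit]
  convert h using 1
  rw [neg_smul]
  abel

end Gaussian

theorem exact_denoising_posterior_score_general
    (n : ℕ)
    (μ₀ : Measure (EuclideanSpace ℝ (Fin n))) [IsProbabilityMeasure μ₀]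
    (σt σy : ℝ) (hσt : 0 < σt) (hσy : 0 < σy)
    (y : EuclideanSpace ℝ (Fin n))
    -- the normalizing constant `Z = ∫ N(y; x₀, σ_y² I) dμ₀(x₀) > 0`
    (Z : ℝ) (hZpos : 0 < Z)
    -- the denoising posterior `μ₀^y`, with density `N(y; x₀, σ_y² I)/Z` w.r.t. `μ₀`
    (μpost : Measure (EuclideanSpace ℝ (Fin n)))
    (hpost : μpost = μ₀.withDensity
      (fun x₀ => ENNReal.ofReal (gaussDensity n (σy ^ 2) x₀ y / Z)))
    -- the noise-perturbed posterior density `p_t(x | y) = ∫ N(x; x₀, σ_t² I) dμ₀^y(x₀)`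
    (pt : EuclideanSpace ℝ (Fin n) → ℝ)
    (hpt : ∀ x, pt x = ∫ x₀, gaussDensity n (σt ^ 2) x₀ x ∂μpost)
    -- `σ̃² = (σ_y⁻² + σ_t⁻²)⁻¹`
    (σtilde2 : ℝ) (hσtilde2 : σtilde2 = ((σy ^ 2)⁻¹ + (σt ^ 2)⁻¹)⁻¹)
    -- `x̃(x) = σ̃² (σ_y⁻² y + σ_t⁻² x)`
    (xtilde : EuclideanSpace ℝ (Fin n) → EuclideanSpace ℝ (Fin n))
    (hxtilde : ∀ x, xtilde x = σtilde2 • ((σy ^ 2)⁻¹ • y + (σt ^ 2)⁻¹ • x))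
    -- the noise-perturbed prior density at level `σ̃`: `p̃(z) = ∫ N(z; x₀, σ̃² I) dμ₀(x₀)`,
    -- whose score is `∇ log p̃`
    (ptilde : EuclideanSpace ℝ (Fin n) → ℝ)
    (hptilde : ∀ z, ptilde z = ∫ x₀, gaussDensity n σtilde2 x₀ z ∂μ₀) :
    ∀ x, 0 < pt x ∧ DifferentiableAt ℝ pt x ∧
      gradient (fun z => Real.log (pt z)) x
        = (σtilde2 / σt ^ 2) • gradient (fun z => Real.log (ptilde z)) (xtilde x)
          - (σy ^ 2 + σt ^ 2)⁻¹ • (x - y) := by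
  intro x
  have hσtilde : 0 < σtilde2 := hσtilde2 ▸ by positivity
  have hptilde' : ptilde = gaussianSmoothing μ₀ σtilde2 := funext hptilde
  have hxtilde' : xtilde = fun z => σtilde2 • (σy ^ 2)⁻¹ • y + (σtilde2 / σt ^ 2) • z := by
    ext1 z
    rw [hxtilde, smul_add, smul_smul σtilde2 (σt ^ 2)⁻¹, div_eq_mul_inv]
  have hpt' : pt = fun z => gaussDensity n (σy ^ 2 + σt ^ 2) y z / Z * ptilde (xtilde z) := by
    ext1 z
    rw [hpt, hpost, integral_gaussDensity_withDensity_gaussDensity (by positivity) (by positivity)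
      hZpos.le, hptilde', hxtilde, hσtilde2]
  subst hptilde' hpt' hxtilde'
  refine ⟨?_, ?_, ?_⟩
  · exact mul_pos (div_pos (gaussDensity_pos (by positivity) y x) hZpos)
      (gaussianSmoothing_pos μ₀ hσtilde _)
  · have hg : DifferentiableAt ℝ (gaussDensity n (σy ^ 2 + σt ^ 2) y) x :=
      (hasGradientAt_gaussDensity (by positivity) y x).differentiableAt
    have hp := differentiable_gaussianSmoothing μ₀ hσtilde
    fun_prop
  · exact (hasGradientAt_log_gaussDensity_div_mul_comp (by positivity) hZpos
      (gaussianSmoothing_pos μ₀ hσtilde) (differentiable_gaussianSmoothing μ₀ hσtilde _) y).gradient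

/-- Proposition 1: for the denoising problem `A = I`, the noise-perturbed posterior density
`p_t(· | y)` is positive and differentiable at every `x`, and its score satisfies
`∇ log p_t(x | y) = (σ̃²/σ_t²) ∇ log p̃ (x̃(x)) − (σ_y² + σ_t²)⁻¹ (x − y)`. -/
theorem exact_denoising_posterior_score
    (n : ℕ) (hn : 1 ≤ n)
    (μ₀ : Measure (EuclideanSpace ℝ (Fin n))) [IsProbabilityMeasure μ₀]
    (σt σy : ℝ) (hσt : 0 < σt) (hσy : 0 < σy)
    (y : EuclideanSpace ℝ (Fin n))
    -- the normalizing constant `Z = ∫ N(y; x₀, σ_y² I) dμ₀(x₀) > 0`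
    (Z : ℝ) (hZ : Z = ∫ x₀, gaussDensity n (σy ^ 2) x₀ y ∂μ₀) (hZpos : 0 < Z)
    -- the denoising posterior `μ₀^y`, with density `N(y; x₀, σ_y² I)/Z` w.r.t. `μ₀`
    (μpost : Measure (EuclideanSpace ℝ (Fin n)))
    (hpost : μpost = μ₀.withDensity
      (fun x₀ => ENNReal.ofReal (gaussDensity n (σy ^ 2) x₀ y / Z)))
    -- the noise-perturbed posterior density `p_t(x | y) = ∫ N(x; x₀, σ_t² I) dμ₀^y(x₀)`
    (pt : EuclideanSpace ℝ (Fin n) → ℝ)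
    (hpt : ∀ x, pt x = ∫ x₀, gaussDensity n (σt ^ 2) x₀ x ∂μpost)
    -- `σ̃² = (σ_y⁻² + σ_t⁻²)⁻¹`
    (σtilde2 : ℝ) (hσtilde2 : σtilde2 = ((σy ^ 2)⁻¹ + (σt ^ 2)⁻¹)⁻¹)
    -- `x̃(x) = σ̃² (σ_y⁻² y + σ_t⁻² x)`
    (xtilde : EuclideanSpace ℝ (Fin n) → EuclideanSpace ℝ (Fin n))
    (hxtilde : ∀ x, xtilde x = σtilde2 • ((σy ^ 2)⁻¹ • y + (σt ^ 2)⁻¹ • x))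
    -- the noise-perturbed prior density at level `σ̃`: `p̃(z) = ∫ N(z; x₀, σ̃² I) dμ₀(x₀)`,
    -- whose score is `∇ log p̃`
    (ptilde : EuclideanSpace ℝ (Fin n) → ℝ)
    (hptilde : ∀ z, ptilde z = ∫ x₀, gaussDensity n σtilde2 x₀ z ∂μ₀) :
    ∀ x, 0 < pt x ∧ DifferentiableAt ℝ pt x ∧
      gradient (fun z => Real.log (pt z)) x
        = (σtilde2 / σt ^ 2) • gradient (fun z => Real.log (ptilde z)) (xtilde x)
          - (σy ^ 2 + σt ^ 2)⁻¹ • (x - y) :=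
  exact_denoising_posterior_score_general n μ₀ σt σy hσt hσy y Z hZpos μpost hpost pt hpt σtilde2
    hσtilde2 xtilde hxtilde ptilde hptilde
end

section
/- There exists a constant c > 0 (independent of x) such that for every x ∈ ℝⁿ, p_t(x | y) = c · N(x; A^{−1}y, σ_y²(AᵀA)^{−1} + σ_t²I) · p_Σ(μ(x)), where Σ = (σ_y^{−2}AᵀA + σ_t^{−2}I)^{−1} and μ(x) = Σ(σ_y^{−2}Aᵀy + σ_t^{−2}x). (Eq. (26) of the appendix: factorization of the noise-perturbed posterior for an invertible measurement operator A.) -/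
open MeasureTheory Real

/-- Multivariate Gaussian density on ℝⁿ with mean `m` and (symmetric positive-definite)
covariance matrix `S`: `N(x; m, S) = (2π)^{-n/2} det(S)^{-1/2} exp(-½⟨x−m, S⁻¹(x−m)⟩)`. -/
noncomputable def matGaussDensity (n : ℕ) (S : Matrix (Fin n) (Fin n) ℝ)
    (m x : EuclideanSpace ℝ (Fin n)) : ℝ :=
  (2 * π) ^ (-(n : ℝ) / 2) * S.det ^ (-(1 : ℝ) / 2) *
    Real.exp (-(∑ i, (x i - m i) * (S⁻¹.mulVec (fun j => x j - m j)) i) / 2)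

/-! After rewriting the likelihood as a Gaussian in `x₀`,
`N(y; Ax₀, σ_y²I) = |det A|⁻¹ N(x₀; A⁻¹y, σ_y²(AᵀA)⁻¹)`, the integrand of `p_t(x | y)` is a product
of two Gaussians, and completing the square in `x₀` gives the product rule
`N(x; x₀, C₁) N(x₀; r, C₂) = N(x; r, C₁ + C₂) N(x₀; m(x), (C₁⁻¹ + C₂⁻¹)⁻¹)`.
The first factor does not depend on `x₀`, so integrating against `μ₀ / Z` gives the factorization
with `c = (Z |det A|)⁻¹`. -/

open Matrix

section CompletingSquare

variable {ι R : Type*} [Fintype ι] [CommRing R]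

theorem Matrix.IsSymm.dotProduct_mulVec_comm {M : Matrix ι ι R} (hM : M.IsSymm) (v w : ι → R) :
    v ⬝ᵥ M *ᵥ w = w ⬝ᵥ M *ᵥ v := by
  rw [dotProduct_mulVec, ← mulVec_transpose, hM.eq, dotProduct_comm]

theorem Matrix.IsSymm.dotProduct_mul_mulVec {M : Matrix ι ι R} (hM : M.IsSymm) (N : Matrix ι ι R)
    (v w : ι → R) : v ⬝ᵥ (M * N) *ᵥ w = (M *ᵥ v) ⬝ᵥ N *ᵥ w := by
  rw [← mulVec_mulVec, dotProduct_mulVec, ← mulVec_transpose, hM.eq]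

theorem Matrix.IsSymm.sub_dotProduct_mulVec_sub {M : Matrix ι ι R} (hM : M.IsSymm)
    (v w : ι → R) :
    (v - w) ⬝ᵥ M *ᵥ (v - w) = v ⬝ᵥ M *ᵥ v - 2 * (w ⬝ᵥ M *ᵥ v) + w ⬝ᵥ M *ᵥ w := by
  rw [mulVec_sub, dotProduct_sub, sub_dotProduct, sub_dotProduct, hM.dotProduct_mulVec_comm v w]
  ring

theorem Matrix.IsSymm.add_dotProduct_mulVec_add {M : Matrix ι ι R} (hM : M.IsSymm)
    (v w : ι → R) :
    (v + w) ⬝ᵥ M *ᵥ (v + w) = v ⬝ᵥ M *ᵥ v + 2 * (w ⬝ᵥ M *ᵥ v) + w ⬝ᵥ M *ᵥ w := by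
  rw [mulVec_add, dotProduct_add, add_dotProduct, add_dotProduct, hM.dotProduct_mulVec_comm v w]
  ring

/-- Completing the square in `u`; for invertible `P₁`, `P₂` the matrix `P₂ S P₁` is
`(P₁⁻¹ + P₂⁻¹)⁻¹`. -/
theorem dotProduct_mulVec_add_dotProduct_mulVec [DecidableEq ι] {P₁ P₂ S : Matrix ι ι R}
    (h₁ : P₁.IsSymm) (h₂ : P₂.IsSymm) (hS : S.IsSymm) (hPS : (P₁ + P₂) * S = 1)
    (x r u : ι → R) :
    (x - u) ⬝ᵥ P₁ *ᵥ (x - u) + (u - r) ⬝ᵥ P₂ *ᵥ (u - r) =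
      (x - r) ⬝ᵥ (P₂ * S * P₁) *ᵥ (x - r) +
        (u - S *ᵥ (P₁ *ᵥ x + P₂ *ᵥ r)) ⬝ᵥ (P₁ + P₂) *ᵥ (u - S *ᵥ (P₁ *ᵥ x + P₂ *ᵥ r)) := by
  have hSP : S * (P₁ + P₂) = 1 := mul_eq_one_comm.mp hPS
  have hK₁ : P₂ * S * P₁ = P₁ - P₁ * S * P₁ := by
    rw [eq_sub_iff_add_eq, ← add_mul, ← add_mul, add_comm P₂, hPS, one_mul]
  have hK₂ : P₂ * S * P₁ = P₂ - P₂ * S * P₂ := by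
    rw [eq_sub_iff_add_eq, ← mul_add, mul_assoc, hSP, mul_one]
  have hK : (P₂ * S * P₁).IsSymm := by
    rw [IsSymm, transpose_mul, transpose_mul, h₁.eq, h₂.eq, hS.eq, ← mul_assoc, hK₁,
      eq_sub_iff_add_eq, ← mul_add, add_comm P₂, mul_assoc, hSP, mul_one]
  have hsandwich : ∀ {M : Matrix ι ι R}, M.IsSymm → ∀ w,
      w ⬝ᵥ (M * S * M) *ᵥ w = (M *ᵥ w) ⬝ᵥ S *ᵥ (M *ᵥ w) := fun hM w => by
    rw [mul_assoc, hM.dotProduct_mul_mulVec, ← mulVec_mulVec]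
  set v := P₁ *ᵥ x + P₂ *ᵥ r
  have hv : (P₁ + P₂) *ᵥ (S *ᵥ v) = v := by rw [mulVec_mulVec, hPS, one_mulVec]
  have hB : (P₁ + P₂).IsSymm := h₁.add h₂
  have hxx : x ⬝ᵥ (P₂ * S * P₁) *ᵥ x = x ⬝ᵥ P₁ *ᵥ x - (P₁ *ᵥ x) ⬝ᵥ S *ᵥ (P₁ *ᵥ x) := by
    rw [hK₁, sub_mulVec, dotProduct_sub, hsandwich h₁]
  have hrr : r ⬝ᵥ (P₂ * S * P₁) *ᵥ r = r ⬝ᵥ P₂ *ᵥ r - (P₂ *ᵥ r) ⬝ᵥ S *ᵥ (P₂ *ᵥ r) := by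
    rw [hK₂, sub_mulVec, dotProduct_sub, hsandwich h₂]
  have hrx : r ⬝ᵥ (P₂ * S * P₁) *ᵥ x = (P₂ *ᵥ r) ⬝ᵥ S *ᵥ (P₁ *ᵥ x) := by
    rw [mul_assoc, h₂.dotProduct_mul_mulVec, ← mulVec_mulVec]
  have hvv : (S *ᵥ v) ⬝ᵥ v = (P₁ *ᵥ x) ⬝ᵥ S *ᵥ (P₁ *ᵥ x) + 2 * ((P₂ *ᵥ r) ⬝ᵥ S *ᵥ (P₁ *ᵥ x))
      + (P₂ *ᵥ r) ⬝ᵥ S *ᵥ (P₂ *ᵥ r) := by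
    rw [dotProduct_comm, hS.add_dotProduct_mulVec_add]
  rw [h₁.sub_dotProduct_mulVec_sub, h₂.sub_dotProduct_mulVec_sub, hK.sub_dotProduct_mulVec_sub,
    hB.sub_dotProduct_mulVec_sub, hB.dotProduct_mulVec_comm (S *ᵥ v), hv, hxx, hrr, hrx, hvv,
    h₂.dotProduct_mulVec_comm r u, add_mulVec, dotProduct_add, dotProduct_add]
  ring

end CompletingSquare

theorem Matrix.mul_inv_add_inv_mul {ι R : Type*} [Fintype ι] [DecidableEq ι] [CommRing R]
    {C₁ C₂ : Matrix ι ι R} (h₁ : IsUnit C₁.det) (h₂ : IsUnit C₂.det) :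
    C₁ * (C₁⁻¹ + C₂⁻¹) * C₂ = C₁ + C₂ := by
  rw [mul_add, mul_nonsing_inv _ h₁, add_mul, one_mul, mul_assoc, nonsing_inv_mul _ h₂, mul_one,
    add_comm]

theorem Matrix.inv_smul_of_ne_zero {ι K : Type*} [Fintype ι] [DecidableEq ι] [Field K] {k : K}
    (hk : k ≠ 0) {A : Matrix ι ι K} (hA : IsUnit A.det) : (k • A)⁻¹ = k⁻¹ • A⁻¹ :=
  inv_smul' A (Units.mk0 k hk) hA

theorem Real.sq_rpow_neg_half (a : ℝ) : (a ^ 2) ^ (-(1 : ℝ) / 2) = |a|⁻¹ := by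
  rw [← sq_abs, ← rpow_natCast, ← rpow_mul (abs_nonneg a)]
  norm_num [rpow_neg_one]

section GaussianDensity

variable {n : ℕ}

theorem matGaussDensity_eq (S : Matrix (Fin n) (Fin n) ℝ) (m x : EuclideanSpace ℝ (Fin n)) :
    matGaussDensity n S m x = (2 * π) ^ (-(n : ℝ) / 2) * S.det ^ (-(1 : ℝ) / 2) *
      Real.exp (-((x - m).ofLp ⬝ᵥ S⁻¹ *ᵥ (x - m).ofLp) / 2) :=
  rfl

theorem matGaussDensity_comm (S : Matrix (Fin n) (Fin n) ℝ) (m x : EuclideanSpace ℝ (Fin n)) :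
    matGaussDensity n S m x = matGaussDensity n S x m := by
  rw [matGaussDensity_eq, matGaussDensity_eq, ← neg_sub x m, WithLp.ofLp_neg, mulVec_neg,
    neg_dotProduct, dotProduct_neg, neg_neg]

theorem gaussDensity_eq_matGaussDensity {v : ℝ} (hv : 0 < v) (m x : EuclideanSpace ℝ (Fin n)) :
    gaussDensity n v m x = matGaussDensity n (v • 1) m x := by
  have hinv : (v • 1 : Matrix (Fin n) (Fin n) ℝ)⁻¹ = v⁻¹ • 1 := by
    rw [inv_smul_of_ne_zero hv.ne' (by simp), inv_one]
  have hdet : (v • 1 : Matrix (Fin n) (Fin n) ℝ).det ^ (-(1 : ℝ) / 2) = v ^ (-(n : ℝ) / 2) := by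
    rw [det_smul, det_one, mul_one, Fintype.card_fin, ← rpow_natCast, ← rpow_mul hv.le]
    ring_nf
  rw [matGaussDensity_eq, gaussDensity, hinv, hdet, mul_rpow (by positivity) hv.le,
    ← real_inner_self_eq_norm_sq, EuclideanSpace.inner_eq_star_dotProduct, star_trivial,
    smul_mulVec, one_mulVec, dotProduct_smul, smul_eq_mul]
  ring_nf

theorem matGaussDensity_mulVec_left {C A : Matrix (Fin n) (Fin n) ℝ} (hC : 0 < C.det)
    (hA : IsUnit A.det) (m x : EuclideanSpace ℝ (Fin n)) :
    matGaussDensity n C (WithLp.toLp 2 (A *ᵥ m.ofLp)) x =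
      |A.det|⁻¹ * matGaussDensity n (A⁻¹ * C * A⁻¹ᵀ) m (WithLp.toLp 2 (A⁻¹ *ᵥ x.ofLp)) := by
  have hdet : (A⁻¹ * C * A⁻¹ᵀ).det ^ (-(1 : ℝ) / 2) = C.det ^ (-(1 : ℝ) / 2) * |A.det| := by
    rw [det_mul, det_mul, det_transpose, det_nonsing_inv, Ring.inverse_eq_inv',
      show A.det⁻¹ * C.det * A.det⁻¹ = C.det / A.det ^ 2 by ring,
      div_rpow hC.le (sq_nonneg _), Real.sq_rpow_neg_half, div_inv_eq_mul]
  have hinv : (A⁻¹ * C * A⁻¹ᵀ)⁻¹ = Aᵀ * C⁻¹ * A := by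
    rw [Matrix.mul_inv_rev, Matrix.mul_inv_rev, transpose_nonsing_inv,
      nonsing_inv_nonsing_inv _ (by rwa [det_transpose]), nonsing_inv_nonsing_inv _ hA, mul_assoc]
  have hx : (x - WithLp.toLp 2 (A *ᵥ m.ofLp)).ofLp =
      A *ᵥ (WithLp.toLp 2 (A⁻¹ *ᵥ x.ofLp) - m).ofLp := by
    simp only [WithLp.ofLp_sub, mulVec_sub, mulVec_mulVec, mul_nonsing_inv _ hA, one_mulVec]
  have hA0 : |A.det| ≠ 0 := abs_ne_zero.mpr hA.ne_zero
  rw [matGaussDensity_eq, matGaussDensity_eq, hdet, hinv, hx, ← mulVec_mulVec, ← mulVec_mulVec,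
    dotProduct_mulVec _ Aᵀ, vecMul_transpose]
  field_simp

theorem gaussDensity_nonneg {v : ℝ} (hv : 0 ≤ v) (m x : EuclideanSpace ℝ (Fin n)) :
    0 ≤ gaussDensity n v m x := by
  unfold gaussDensity
  positivity

theorem matGaussDensity_mul_matGaussDensity {C₁ C₂ : Matrix (Fin n) (Fin n) ℝ}
    (h₁ : C₁.PosDef) (h₂ : C₂.PosDef) (r u x : EuclideanSpace ℝ (Fin n)) :
    matGaussDensity n C₁ u x * matGaussDensity n C₂ r u =
      matGaussDensity n (C₁ + C₂) r x *
        matGaussDensity n (C₁⁻¹ + C₂⁻¹)⁻¹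
          (WithLp.toLp 2 ((C₁⁻¹ + C₂⁻¹)⁻¹ *ᵥ (C₁⁻¹ *ᵥ x.ofLp + C₂⁻¹ *ᵥ r.ofLp))) u := by
  have hB : (C₁⁻¹ + C₂⁻¹).PosDef := h₁.inv.add h₂.inv
  have hBdet : IsUnit (C₁⁻¹ + C₂⁻¹).det := hB.det_pos.ne'.isUnit
  have hsum := mul_inv_add_inv_mul h₁.det_pos.ne'.isUnit h₂.det_pos.ne'.isUnit
  have hsum_inv : (C₁ + C₂)⁻¹ = C₂⁻¹ * (C₁⁻¹ + C₂⁻¹)⁻¹ * C₁⁻¹ := by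
    rw [← hsum, Matrix.mul_inv_rev, Matrix.mul_inv_rev, mul_assoc]
  have hdet : C₁.det * C₂.det = (C₁ + C₂).det * (C₁⁻¹ + C₂⁻¹)⁻¹.det := by
    rw [← hsum, det_mul, det_mul, det_nonsing_inv, Ring.inverse_eq_inv']
    field_simp [hB.det_pos.ne']
  have hq := dotProduct_mulVec_add_dotProduct_mulVec
    (isHermitian_iff_isSymm.mp h₁.inv.isHermitian) (isHermitian_iff_isSymm.mp h₂.inv.isHermitian)
    (isHermitian_iff_isSymm.mp hB.inv.isHermitian) (mul_nonsing_inv _ hBdet) x.ofLp r.ofLp u.ofLp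
  have hsplit : ∀ a b c d e : ℝ, a * b * exp c * (a * d * exp e) = a * a * (b * d) * exp (c + e) :=
    fun a b c d e => by rw [exp_add]; ring
  rw [matGaussDensity_eq, matGaussDensity_eq, matGaussDensity_eq, matGaussDensity_eq, hsplit,
    hsplit, ← mul_rpow h₁.det_pos.le h₂.det_pos.le, hdet,
    mul_rpow (h₁.add h₂).det_pos.le hB.inv.det_pos.le, nonsing_inv_nonsing_inv _ hBdet, hsum_inv]
  simp only [WithLp.ofLp_sub]
  congr 2
  linear_combination (-1 / 2 : ℝ) * hq

theorem gaussDensity_mulVec_mul_gaussDensity {vy vt : ℝ} (hvy : 0 < vy) (hvt : 0 < vt)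
    {A : Matrix (Fin n) (Fin n) ℝ} (hA : IsUnit A.det) (x₀ x y : EuclideanSpace ℝ (Fin n)) :
    gaussDensity n vy (WithLp.toLp 2 (A *ᵥ x₀.ofLp)) y * gaussDensity n vt x₀ x =
      |A.det|⁻¹ *
          matGaussDensity n (vy • (Aᵀ * A)⁻¹ + vt • 1) (WithLp.toLp 2 (A⁻¹ *ᵥ y.ofLp)) x *
        matGaussDensity n (vy⁻¹ • (Aᵀ * A) + vt⁻¹ • 1)⁻¹
          (WithLp.toLp 2
            ((vy⁻¹ • (Aᵀ * A) + vt⁻¹ • 1)⁻¹ *ᵥ (vy⁻¹ • Aᵀ *ᵥ y.ofLp + vt⁻¹ • x.ofLp)))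
          x₀ := by
  have hAA : (Aᵀ * A).PosDef := by
    simpa only [conjTranspose_eq_transpose_of_trivial] using PosDef.conjTranspose_mul_self A
      (mulVec_injective_of_isUnit ((isUnit_iff_isUnit_det A).mpr hA))
  have hAAdet : IsUnit (Aᵀ * A).det := hAA.det_pos.ne'.isUnit
  have hcov : A⁻¹ * (vy • 1) * A⁻¹ᵀ = vy • (Aᵀ * A)⁻¹ := by
    rw [Matrix.mul_inv_rev, transpose_nonsing_inv, mul_smul_comm, mul_one, smul_mul_assoc]
  rw [gaussDensity_eq_matGaussDensity hvy, gaussDensity_eq_matGaussDensity hvt,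
    matGaussDensity_mulVec_left (PosDef.one.smul hvy).det_pos hA, hcov,
    matGaussDensity_comm _ x₀, mul_assoc, mul_comm (matGaussDensity n _ _ x₀),
    matGaussDensity_mul_matGaussDensity (PosDef.one.smul hvt) (hAA.inv.smul hvy),
    inv_smul_of_ne_zero hvt.ne' (by simp), inv_smul_of_ne_zero hvy.ne' hAA.inv.det_pos.ne'.isUnit,
    nonsing_inv_nonsing_inv _ hAAdet, inv_one, add_comm (vt • 1), add_comm (vt⁻¹ • 1),
    ← mul_assoc]
  congr 4
  rw [smul_mulVec, smul_mulVec, one_mulVec, ← mulVec_mulVec, WithLp.ofLp_toLp, mulVec_mulVec _ A,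
    mul_nonsing_inv _ hA, one_mulVec, add_comm]

end GaussianDensity

theorem integral_withDensity_ofReal {X E : Type*} [MeasurableSpace X] [NormedAddCommGroup E]
    [NormedSpace ℝ E] {μ : Measure X} {f : X → ℝ} (hf : Measurable f) (hf₀ : ∀ x, 0 ≤ f x)
    (g : X → E) :
    ∫ x, g x ∂μ.withDensity (fun x => ENNReal.ofReal (f x)) = ∫ x, f x • g x ∂μ := by
  rw [integral_withDensity_eq_integral_toReal_smul hf.ennreal_ofReal
    (ae_of_all _ fun _ => ENNReal.ofReal_lt_top)]
  simp only [ENNReal.toReal_ofReal (hf₀ _)]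

theorem posterior_factorization_invertible_general
    (n : ℕ)
    (μ₀ : Measure (EuclideanSpace ℝ (Fin n)))
    (σt σy : ℝ) (hσt : 0 < σt) (hσy : 0 < σy)
    (y : EuclideanSpace ℝ (Fin n))
    (A : Matrix (Fin n) (Fin n) ℝ) (hA : IsUnit A.det)
    -- the normalizing constant `Z = ∫ N(y; Ax₀, σ_y² I) dμ₀(x₀) > 0`
    (Z : ℝ)
    (hZpos : 0 < Z)
    -- the posterior `μ₀^y`, with density `N(y; Ax₀, σ_y² I)/Z` w.r.t. `μ₀`
    (μpost : Measure (EuclideanSpace ℝ (Fin n)))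
    (hpost : μpost = μ₀.withDensity (fun x₀ => ENNReal.ofReal
      (gaussDensity n (σy ^ 2) (WithLp.toLp 2 (fun i => (A.mulVec (fun j => x₀ j)) i)) y / Z)))
    -- the noise-perturbed posterior density `p_t(x | y) = ∫ N(x; x₀, σ_t² I) dμ₀^y(x₀)`
    (pt : EuclideanSpace ℝ (Fin n) → ℝ)
    (hpt : ∀ x, pt x = ∫ x₀, gaussDensity n (σt ^ 2) x₀ x ∂μpost)
    -- `Σ = (σ_y⁻²AᵀA + σ_t⁻²I)⁻¹`
    (S : Matrix (Fin n) (Fin n) ℝ)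
    (hS : S = ((σy ^ 2)⁻¹ • (A.transpose * A) + (σt ^ 2)⁻¹ • (1 : Matrix (Fin n) (Fin n) ℝ))⁻¹)
    -- `μ(x) = Σ(σ_y⁻²Aᵀy + σ_t⁻²x)`
    (μvec : EuclideanSpace ℝ (Fin n) → EuclideanSpace ℝ (Fin n))
    (hμvec : ∀ x i, μvec x i =
      (S.mulVec ((σy ^ 2)⁻¹ • A.transpose.mulVec (fun j => y j) + (σt ^ 2)⁻¹ • fun j => x j)) i)
    -- the non-isotropic noise-perturbed prior density `p_Σ(z) = ∫ N(z; x₀, Σ) dμ₀(x₀)`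
    (pS : EuclideanSpace ℝ (Fin n) → ℝ)
    (hpS : ∀ z, pS z = ∫ x₀, matGaussDensity n S x₀ z ∂μ₀) :
    ∃ c > 0, ∀ x, pt x =
      c * matGaussDensity n
            (σy ^ 2 • (A.transpose * A)⁻¹ + σt ^ 2 • (1 : Matrix (Fin n) (Fin n) ℝ))
            (WithLp.toLp 2 (fun i => (A⁻¹.mulVec (fun j => y j)) i)) x
        * pS (μvec x) := by
  refine ⟨(Z * |A.det|)⁻¹, by have := hA.ne_zero; positivity, fun x => ?_⟩
  have hμ : μvec x = WithLp.toLp 2 (S *ᵥ ((σy ^ 2)⁻¹ • Aᵀ *ᵥ y.ofLp + (σt ^ 2)⁻¹ • x.ofLp)) := by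
    ext i
    exact hμvec x i
  have hlik : Measurable fun x₀ : EuclideanSpace ℝ (Fin n) =>
      gaussDensity n (σy ^ 2) (WithLp.toLp 2 (A *ᵥ x₀.ofLp)) y / Z := by
    unfold gaussDensity
    fun_prop
  rw [hpt, hpost, integral_withDensity_ofReal hlik
    (fun x₀ => div_nonneg (gaussDensity_nonneg (sq_nonneg σy) _ _) hZpos.le), hpS,
    ← integral_const_mul]
  refine integral_congr_ae (ae_of_all _ fun x₀ => ?_)
  beta_reduce
  rw [smul_eq_mul, div_mul_eq_mul_div,
    gaussDensity_mulVec_mul_gaussDensity (by positivity) (by positivity) hA, ← hS, ← hμ,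
    matGaussDensity_comm S x₀]
  field_simp

/-- Eq. (26): factorization of the noise-perturbed posterior for an invertible measurement
operator `A`: there is a constant `c > 0`, independent of `x`, with
`p_t(x | y) = c · N(x; A⁻¹y, σ_y²(AᵀA)⁻¹ + σ_t²I) · p_Σ(μ(x))`, where
`Σ = (σ_y⁻²AᵀA + σ_t⁻²I)⁻¹` and `μ(x) = Σ(σ_y⁻²Aᵀy + σ_t⁻²x)`. -/
theorem posterior_factorization_invertible
    (n : ℕ) (hn : 1 ≤ n)
    (μ₀ : Measure (EuclideanSpace ℝ (Fin n))) [IsProbabilityMeasure μ₀]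
    (σt σy : ℝ) (hσt : 0 < σt) (hσy : 0 < σy)
    (y : EuclideanSpace ℝ (Fin n))
    (A : Matrix (Fin n) (Fin n) ℝ) (hA : IsUnit A.det)
    -- the normalizing constant `Z = ∫ N(y; Ax₀, σ_y² I) dμ₀(x₀) > 0`
    (Z : ℝ)
    (hZ : Z = ∫ x₀, gaussDensity n (σy ^ 2) (WithLp.toLp 2 (fun i => (A.mulVec (fun j => x₀ j)) i)) y ∂μ₀)
    (hZpos : 0 < Z)
    -- the posterior `μ₀^y`, with density `N(y; Ax₀, σ_y² I)/Z` w.r.t. `μ₀`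
    (μpost : Measure (EuclideanSpace ℝ (Fin n)))
    (hpost : μpost = μ₀.withDensity (fun x₀ => ENNReal.ofReal
      (gaussDensity n (σy ^ 2) (WithLp.toLp 2 (fun i => (A.mulVec (fun j => x₀ j)) i)) y / Z)))
    -- the noise-perturbed posterior density `p_t(x | y) = ∫ N(x; x₀, σ_t² I) dμ₀^y(x₀)`
    (pt : EuclideanSpace ℝ (Fin n) → ℝ)
    (hpt : ∀ x, pt x = ∫ x₀, gaussDensity n (σt ^ 2) x₀ x ∂μpost)
    -- `Σ = (σ_y⁻²AᵀA + σ_t⁻²I)⁻¹`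
    (S : Matrix (Fin n) (Fin n) ℝ)
    (hS : S = ((σy ^ 2)⁻¹ • (A.transpose * A) + (σt ^ 2)⁻¹ • (1 : Matrix (Fin n) (Fin n) ℝ))⁻¹)
    -- `μ(x) = Σ(σ_y⁻²Aᵀy + σ_t⁻²x)`
    (μvec : EuclideanSpace ℝ (Fin n) → EuclideanSpace ℝ (Fin n))
    (hμvec : ∀ x i, μvec x i =
      (S.mulVec ((σy ^ 2)⁻¹ • A.transpose.mulVec (fun j => y j) + (σt ^ 2)⁻¹ • fun j => x j)) i)
    -- the non-isotropic noise-perturbed prior density `p_Σ(z) = ∫ N(z; x₀, Σ) dμ₀(x₀)`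
    (pS : EuclideanSpace ℝ (Fin n) → ℝ)
    (hpS : ∀ z, pS z = ∫ x₀, matGaussDensity n S x₀ z ∂μ₀) :
    ∃ c > 0, ∀ x, pt x =
      c * matGaussDensity n
            (σy ^ 2 • (A.transpose * A)⁻¹ + σt ^ 2 • (1 : Matrix (Fin n) (Fin n) ℝ))
            (WithLp.toLp 2 (fun i => (A⁻¹.mulVec (fun j => y j)) i)) x
        * pS (μvec x) :=
  posterior_factorization_invertible_general n μ₀ σt σy hσt hσy y A hA Z hZpos μpost hpost pt hpt S
    hS μvec hμvec pS hpS
end
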